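/- arXiv:2310.12272 — 3 statements merged into one kernel-verified Lean document; each statement's English description precedes it below -/
import Mathlib

section
/- Under the factorization P(v|y) = Q(v|n_v) · G(v, (m_w)_{w∈Y\{0}}, (n_w)_{w≠v}) where n_v counts consideration-peers choosing v, m_w counts preference-peers choosing w, and G does not depend on n_v: if agent a' is a consideration-only peer (changing a'’s choice changes only the counts n_w, not the counts m_w), then the double difference Δ^w_{a''} Δ^v_{a'} ln P(v | 0) = 0 for any agent a'' and any alternatives v ≠ w, both nonzero, where Δ^u_b f(y) = f(y with b's component set to u) − f(y). -/
open Finset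

private lemma filt_card_eq {A α : Type*} [DecidableEq A] [DecidableEq α]
    (S : Finset A) (y y' : A → α) (u : α)
    (h : ∀ b ∈ S, (y b = u ↔ y' b = u)) :
    (S.filter (fun b => y b = u)).card = (S.filter (fun b => y' b = u)).card := by
  congr 1
  exact Finset.filter_congr h

/-- Under the factorization
`ln P(v|y) = ln Q(v | n_C(v,y)) + ln G(v, (m_w(y)), (n_w(y))_{w ≠ v})`, where
`G` does not depend on the count of consideration peers choosing `v` (nor on
the count for the default), if `a'` is a consideration-only peer (so switching
her choice does not change preference-peer counts), then the double difference
`Δ^w_{a''} Δ^v_{a'} ln P(v | 𝟎) = 0` for distinct nondefault alternatives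
`v ≠ w`. -/
theorem double_difference_zero_of_consideration_only_peer
    {A α : Type*} [Fintype A] [DecidableEq A] [DecidableEq α] (d : α)
    (NC NR : Finset A)
    (P : α → (A → α) → ℝ) (hPpos : ∀ v y, 0 < P v y)
    (Q : α → ℕ → ℝ) (G : α → (α → ℕ) → (α → ℕ) → ℝ)
    -- counts of consideration and preference peers choosing each alternative
    (nC : α → (A → α) → ℕ) (mR : α → (A → α) → ℕ)
    (hnC : ∀ u y, nC u y = (NC.filter (fun b => y b = u)).card)
    (hmR : ∀ u y, mR u y = (NR.filter (fun b => y b = u)).card)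
    -- factorization
    (hfact : ∀ v y, P v y = Q v (nC v y) * G v (fun w => mR w y) (fun w => nC w y))
    -- G does not depend on the consideration count of v (nor of the default)
    (hG : ∀ v m n n', (∀ w, w ≠ v → w ≠ d → n w = n' w) → G v m n = G v m n')
    (a' a'' : A) (ha : a' ≠ a'')
    -- a' is a consideration-only peer
    (ha' : a' ∈ NC ∧ a' ∉ NR)
    (v w : α) (hv : v ≠ d) (hw : w ≠ d) (hvw : v ≠ w) :
    (Real.log (P v (Function.update (Function.update (fun _ => d) a' v) a'' w)) -
        Real.log (P v (Function.update (fun _ => d) a' v))) -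
      (Real.log (P v (Function.update (fun _ => d) a'' w)) -
        Real.log (P v (fun _ => d))) = 0 := by
  obtain ⟨haC, haR⟩ := ha'
  set y0 : A → α := (fun _ => d) with hy0
  set y1 : A → α := Function.update y0 a' v with hy1
  set y2 : A → α := Function.update y0 a'' w with hy2
  set y3 : A → α := Function.update y1 a'' w with hy3
  have h1 : nC v y3 = nC v y1 := by
    rw [hnC, hnC]
    apply filt_card_eq
    intro b _
    by_cases hb : b = a''
    · subst hb
      simp [hy3, hy1, hy0, Function.update_apply, Ne.symm ha, Ne.symm hvw, Ne.symm hv]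
    · simp [hy3, Function.update_apply, hb]
  have h2 : nC v y2 = nC v y0 := by
    rw [hnC, hnC]
    apply filt_card_eq
    intro b _
    by_cases hb : b = a''
    · subst hb
      simp [hy2, hy0, Function.update_apply, Ne.symm hvw, Ne.symm hv]
    · simp [hy2, Function.update_apply, hb]
  have hm10 : (fun u => mR u y1) = (fun u => mR u y0) := by
    funext u
    rw [hmR, hmR]
    apply filt_card_eq
    intro b hb
    have : b ≠ a' := fun h => haR (h ▸ hb)
    simp [hy1, Function.update_apply, this]
  have hm32 : (fun u => mR u y3) = (fun u => mR u y2) := by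
    funext u
    rw [hmR, hmR]
    apply filt_card_eq
    intro b hb
    have hb' : b ≠ a' := fun h => haR (h ▸ hb)
    by_cases hb'' : b = a''
    · subst hb''; simp [hy3, hy2, Function.update_apply]
    · simp [hy3, hy2, hy1, Function.update_apply, hb', hb'']
  have hn10 : ∀ u, u ≠ v → u ≠ d → nC u y1 = nC u y0 := by
    intro u hu hud
    rw [hnC, hnC]
    apply filt_card_eq
    intro b _
    by_cases hb : b = a'
    · subst hb
      simp [hy1, hy0, Function.update_apply, Ne.symm hu, Ne.symm hud]
    · simp [hy1, Function.update_apply, hb]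
  have hn32 : ∀ u, u ≠ v → u ≠ d → nC u y3 = nC u y2 := by
    intro u hu hud
    rw [hnC, hnC]
    apply filt_card_eq
    intro b _
    by_cases hb'' : b = a''
    · subst hb''; simp [hy3, hy2, Function.update_apply]
    · by_cases hb : b = a'
      · subst hb
        simp [hy3, hy2, hy1, hy0, Function.update_apply, hb'', Ne.symm hu, Ne.symm hud]
      · simp [hy3, hy2, hy1, Function.update_apply, hb, hb'']
  have hG10 : G v (fun u => mR u y1) (fun u => nC u y1)
      = G v (fun u => mR u y0) (fun u => nC u y0) := by
    rw [hm10]; exact hG v _ _ _ hn10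
  have hG32 : G v (fun u => mR u y3) (fun u => nC u y3)
      = G v (fun u => mR u y2) (fun u => nC u y2) := by
    rw [hm32]; exact hG v _ _ _ hn32
  have key : P v y3 * P v y0 = P v y2 * P v y1 := by
    rw [hfact v y3, hfact v y0, hfact v y2, hfact v y1, h1, h2, hG32, hG10]
    ring
  have hlog : Real.log (P v y3) + Real.log (P v y0)
      = Real.log (P v y2) + Real.log (P v y1) := by
    rw [← Real.log_mul (hPpos v y3).ne' (hPpos v y0).ne',
        ← Real.log_mul (hPpos v y2).ne' (hPpos v y1).ne', key]
  linarith
end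

section
/- Let p₀ = P(v | y) and p₁ = P(v | y^{v'}_{a'}) satisfy p₀ = q₀·s + (1 − q₀)·p* and p₁ = q₁·s + (1 − q₁)·p*, where q₀ = Q(v'|0), q₁ = Q(v'|1) ∈ (0,1], s ∈ [0,1], p* ∈ [0,1], and t := q₁/q₀ ≠ 1. Then p* = (p₁ − t·p₀)/(1 − t). (Identification of the counterfactual choice probability when alternative v' is removed from the menu via a consideration-only peer switching to v'.) -/
/-- Identification of the counterfactual choice probability when
alternative `v'` is removed from the menu, via a consideration-only peer
switching to `v'`: if `p₀ = q₀·s + (1−q₀)·p*`, `p₁ = q₁·s + (1−q₁)·p*` with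
`t = q₁/q₀ ≠ 1`, then `p* = (p₁ − t·p₀)/(1 − t)`. -/
theorem counterfactual_probability_identified
    (q₀ q₁ s pstar p₀ p₁ : ℝ)
    (hq₀ : 0 < q₀ ∧ q₀ ≤ 1) (hq₁ : 0 < q₁ ∧ q₁ ≤ 1)
    (hs : 0 ≤ s ∧ s ≤ 1) (hpstar : 0 ≤ pstar ∧ pstar ≤ 1)
    (ht : q₁ / q₀ ≠ 1)
    (h₀ : p₀ = q₀ * s + (1 - q₀) * pstar)
    (h₁ : p₁ = q₁ * s + (1 - q₁) * pstar) :
    pstar = (p₁ - (q₁ / q₀) * p₀) / (1 - q₁ / q₀) := by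
  have hq0 : q₀ ≠ 0 := ne_of_gt hq₀.1
  have hne : 1 - q₁ / q₀ ≠ 0 := sub_ne_zero.mpr (Ne.symm ht)
  have hne' : q₀ - q₁ ≠ 0 := by
    intro h
    apply ht
    rw [sub_eq_zero] at h
    rw [← h, div_self hq0]
  subst h₀ h₁
  field_simp
  ring
end

section
/- Let Y be a finite menu with default 0, let C be a random subset of Y containing 0 with distribution Pr independent of a parameter w, and suppose the conditional choice given C is argmax of utilities that diverge as w → w̄ at menu-specific rates, so that in the limit the agent picks the ≻-best element of C\{0} (or 0 if C = {0}) for a given strict linear order ≻ on Y\{0}. If v is the ≻-minimum of Y\{0}, then lim_{w→w̄} P(v|w) = Pr(C = {0, v}) and lim_{w→w̄} P(0|w) = Pr(C = {0}). Consequently, by varying ≻ over all linear orders and recursing over set sizes, Pr(C = S) is identified for every S ⊆ Y containing 0. -/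
open Finset
open scoped Classical

/-- The limiting (deterministic-preference) choice probability of `v`: the
agent picks the `σ`-best element of `C \ {d}` (and the default `d` only when
`C = {d}`), where the strict ranking is given by an injective score `σ`. -/
noncomputable def limP {α : Type*} [Fintype α] [DecidableEq α]
    (d : α) (Pr : Finset α → ℝ) (σ : α → ℕ) (v : α) : ℝ :=
  ∑ C ∈ (Finset.univ : Finset α).powerset,
    (if C = {d} then (if v = d then (1 : ℝ) else 0)
     else if v ∈ C.erase d ∧ ∀ u ∈ C.erase d, σ u ≤ σ v then 1 else 0) * Pr C

/-! For `v ≠ d`, the limiting probability of `v` collects exactly the considered sets `C ∋ d`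
whose nondefault members all rank at most `v`. If the ranking puts exactly `S \ {d}` at or below
`v`, it is therefore the sum of `Pr C` over the `C ⊆ S` containing `d` and `v`. For the worst `v`
this sum is the single term `Pr {d, v}`; in general `Pr S` is its only term not indexed by a proper
subset of `S`, so strong induction on `S` identifies `Pr`. -/

section

variable {α : Type*} [Fintype α] [DecidableEq α] {d : α} {Pr : Finset α → ℝ}

theorem limP_default (σ : α → ℕ) : limP d Pr σ d = Pr {d} := by
  rw [limP, sum_eq_single {d}]
  · simp
  · intro C _ hC
    simp [hC]
  · simp

theorem limP_eq_sum_powerset_of_le_iff_mem (hsupp : ∀ C, d ∉ C → Pr C = 0)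
    {σ : α → ℕ} {v : α} {S : Finset α} (hvd : v ≠ d) (hdS : d ∈ S)
    (hS : ∀ u ≠ d, σ u ≤ σ v ↔ u ∈ S) :
    limP d Pr σ v = ∑ C ∈ S.powerset with d ∈ C ∧ v ∈ C, Pr C := by
  have hterm : ∀ C : Finset α,
      (if C = {d} then (if v = d then (1 : ℝ) else 0)
        else if v ∈ C.erase d ∧ ∀ u ∈ C.erase d, σ u ≤ σ v then 1 else 0) * Pr C
      = if C ⊆ S ∧ d ∈ C ∧ v ∈ C then Pr C else 0 := by
    intro C
    by_cases hdC : d ∈ C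
    · have hbest : (∀ u ∈ C.erase d, σ u ≤ σ v) ↔ C ⊆ S := by
        rw [← erase_subset_iff_of_mem hdS]
        exact forall₂_congr fun u hu => hS u (ne_of_mem_erase hu)
      by_cases hCd : C = {d}
      · simp [hCd, hvd]
      · simp only [if_neg hCd, hbest]
        simp only [mem_erase, ite_mul, one_mul, zero_mul]
        exact if_congr (by tauto) rfl rfl
    · simp [hsupp C hdC, hdC]
  rw [limP, sum_congr rfl fun C _ => hterm C, ← sum_filter]
  congr 1
  ext C
  simp only [mem_filter, mem_powerset, subset_univ, true_and]

theorem limP_of_forall_le (hsupp : ∀ C, d ∉ C → Pr C = 0)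
    {σ : α → ℕ} (hσ : Function.Injective σ) {v : α} (hvd : v ≠ d)
    (hmin : ∀ u ∈ univ.erase d, σ v ≤ σ u) :
    limP d Pr σ v = Pr (insert d {v}) := by
  have hS : ∀ u ≠ d, σ u ≤ σ v ↔ u ∈ (insert d {v} : Finset α) := by
    intro u hud
    simp only [mem_insert, mem_singleton, hud, false_or]
    exact ⟨fun h => hσ (h.antisymm (hmin u (mem_erase.mpr ⟨hud, mem_univ u⟩))), fun h => h ▸ le_rfl⟩
  rw [limP_eq_sum_powerset_of_le_iff_mem hsupp hvd (mem_insert_self d {v}) hS]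
  convert sum_singleton Pr (insert d {v})
  ext C
  simp only [mem_filter, mem_powerset, mem_singleton]
  constructor
  · rintro ⟨hC, hd, hv⟩
    exact hC.antisymm (insert_subset hd (singleton_subset_iff.mpr hv))
  · rintro rfl
    simp

theorem exists_injective_le_iff_mem (S : Finset α) {v : α} (hvS : v ∈ S) :
    ∃ σ : α → ℕ, Function.Injective σ ∧ ∀ u, σ u ≤ σ v ↔ u ∈ S := by
  let n := Fintype.card α
  let e : α → ℕ := fun u => Fintype.equivFin α u
  have he : Function.Injective e := fun a b h => (Fintype.equivFin α).injective (Fin.ext h)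
  have hlt : ∀ u, e u < n := fun u => (Fintype.equivFin α u).2
  refine ⟨fun u => if u = v then n else if u ∈ S then e u else n + 1 + e u, ?_, ?_⟩
  · intro a b hab
    have := hlt a
    have := hlt b
    dsimp only at hab
    split_ifs at hab <;> first | subst_vars; rfl | omega | exact he (by omega)
  · intro u
    have := hlt u
    simp only [↓reduceIte]
    split_ifs with huv huS
    · simp [huv, hvS]
    · simp [huS, this.le]
    · simp only [huS, iff_false]
      omega

theorem eq_of_limP_eq {Pr' : Finset α → ℝ} (hsupp : ∀ C, d ∉ C → Pr C = 0)
    (hsupp' : ∀ C, d ∉ C → Pr' C = 0)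
    (h : ∀ σ : α → ℕ, Function.Injective σ → ∀ v, limP d Pr σ v = limP d Pr' σ v)
    (S : Finset α) : Pr S = Pr' S := by
  induction S using Finset.strongInduction with
  | _ S ih =>
  by_cases hdS : d ∈ S
  swap
  · rw [hsupp S hdS, hsupp' S hdS]
  rcases (S.erase d).eq_empty_or_nonempty with hS | ⟨v, hv⟩
  · obtain ⟨σ, hσ, -⟩ := exists_injective_le_iff_mem {d} (mem_singleton_self d)
    rw [← insert_erase hdS, hS, insert_empty]
    simpa only [limP_default] using h σ hσ d
  obtain ⟨hvd, hvS⟩ := mem_erase.mp hv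
  obtain ⟨σ, hσ, hle⟩ := exists_injective_le_iff_mem S hvS
  have hsum := h σ hσ v
  rw [limP_eq_sum_powerset_of_le_iff_mem hsupp hvd hdS fun u _ => hle u,
    limP_eq_sum_powerset_of_le_iff_mem hsupp' hvd hdS fun u _ => hle u] at hsum
  have hST : S ∈ S.powerset.filter (fun C => d ∈ C ∧ v ∈ C) :=
    mem_filter.mpr ⟨mem_powerset_self S, hdS, hvS⟩
  rw [← add_sum_erase _ _ hST, ← add_sum_erase _ _ hST,
    sum_congr rfl fun C hC => ih C ?_] at hsum
  · exact add_right_cancel hsum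
  obtain ⟨hCS, hC⟩ := mem_erase.mp hC
  exact ssubset_of_subset_of_ne (mem_powerset.mp (mem_filter.mp hC).1) hCS

end

/-- In the limit where utilities diverge so that the agent picks
the `σ`-best considered nondefault alternative: if `v` is `σ`-worst among
nondefault alternatives then `lim P(v) = Pr({d,v})`, and `lim P(d) = Pr({d})`;
consequently, varying the ranking over all linear orders identifies
`Pr(C = S)` for every `S` containing the default. -/
theorem limit_choice_identifies_consideration_distribution
    {α : Type*} [Fintype α] [DecidableEq α] (d : α)
    (Pr : Finset α → ℝ)
    (hsupp : ∀ C : Finset α, d ∉ C → Pr C = 0) :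
    (∀ σ : α → ℕ, Function.Injective σ →
      ∀ v : α, v ≠ d → (∀ u ∈ Finset.univ.erase d, σ v ≤ σ u) →
        limP d Pr σ v = Pr (insert d {v})) ∧
    (∀ σ : α → ℕ, Function.Injective σ → limP d Pr σ d = Pr {d}) ∧
    (∀ Pr' : Finset α → ℝ, (∀ C : Finset α, d ∉ C → Pr' C = 0) →
      (∀ σ : α → ℕ, Function.Injective σ → ∀ v : α, limP d Pr σ v = limP d Pr' σ v) →
      ∀ S : Finset α, d ∈ S → Pr S = Pr' S) :=
  ⟨fun _ hσ _ hvd hmin => limP_of_forall_le hsupp hσ hvd hmin,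
    fun σ _ => limP_default σ,
    fun _ hsupp' h S _ => eq_of_limP_eq hsupp hsupp' h S⟩
end
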